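/- Let W be a Banach space, T > 0, and let G : [0,T] → L(W) be strongly continuous with G(0) = I, G(t) compact for every t ∈ (0,T], and t ↦ G(t) operator-norm continuous on (0,T]. Define 𝒢 : L¹([0,T];W) → C([0,T];W) by (𝒢 g)(t) = ∫₀ᵗ G(t−s) g(s) ds. If (gₙ)ₙ ⊂ L¹([0,T];W) is integrably bounded (there exists φ ∈ L¹([0,T];ℝ₊) with ‖gₙ(t)‖_W ≤ φ(t) for a.e. t and all n) and gₙ ⇀ g weakly in L¹([0,T];W) as n → ∞, then 𝒢 gₙ → 𝒢 g strongly in C([0,T];W), i.e., sup_{t∈[0,T]} ‖(𝒢 gₙ)(t) − (𝒢 g)(t)‖_W → 0 as n → ∞. -/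

import Mathlib

/-!
Write `hₙ = gₙ - g`, dominated by `ψ = φ + ‖g‖`. Replacing the kernel `G(τ)` by `G(max τ δ)`
changes `(𝒢 hₙ)(t)` by at most `2M ∫_{t-δ}^t ψ`, where `M` bounds `‖G‖` (Banach–Steinhaus); by
absolute continuity of the integral this is small uniformly in `n` and `t`. The cut-off kernel `K`
is norm-continuous, so the functions `t ↦ ∫₀ᵗ K(t-s) hₙ(s) ds` are equicontinuous, and its values
form a compact set of compact operators, so for fixed `t` all these integrals lie in one compact
set `(∫ψ) • D`, with `D` the closed convex hull of the images of the unit ball. Testing the weak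
`L¹` convergence against `s ↦ 1_{(0,t]}(s) f ∘ K(t-s) ∈ L^∞(W*)` shows that they converge weakly
to `0`, hence in norm by compactness. Pointwise convergence and equicontinuity on the compact
`[0,T]` give uniform convergence.
-/

open MeasureTheory Set Filter Metric Topology
open scoped Pointwise ENNReal NNReal Interval

theorem EquicontinuousOn.tendstoUniformlyOn_of_forall_tendsto {ι X α : Type*}
    [TopologicalSpace X] [UniformSpace α] {F : ι → X → α} {f : X → α} {K : Set X}
    {l : Filter ι} (hK : IsCompact K) (hF : EquicontinuousOn F K)
    (h : ∀ x ∈ K, Tendsto (fun i => F i x) l (𝓝 (f x))) : TendstoUniformlyOn F f l K := by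
  have := (EquicontinuousOn.tendsto_uniformOnFun_iff_pi' (𝔖 := {K}) (by simpa using hK)
    (by simpa using hF) l f).mpr (by
      rw [sUnion_singleton, tendsto_pi_nhds]
      exact fun x => h x x.2)
  exact UniformOnFun.tendsto_iff_tendstoUniformlyOn.mp this K rfl

theorem tendstoUniformlyOn_of_forall_exists_approx {ι α β : Type*} [PseudoMetricSpace β]
    {F : ι → α → β} {f : α → β} {l : Filter ι} {s : Set α}
    (h : ∀ ε > 0, ∃ F' : ι → α → β,
      TendstoUniformlyOn F' f l s ∧ ∀ i, ∀ x ∈ s, dist (F i x) (F' i x) ≤ ε) :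
    TendstoUniformlyOn F f l s := by
  rw [Metric.tendstoUniformlyOn_iff]
  intro ε hε
  obtain ⟨F', hF', hFF'⟩ := h (ε / 2) (half_pos hε)
  filter_upwards [Metric.tendstoUniformlyOn_iff.mp hF' _ (half_pos hε)] with i hi x hx
  linarith [dist_triangle (f x) (F' i x) (F i x), hi x hx, dist_comm (F i x) (F' i x),
    hFF' i x hx]

theorem tendsto_of_forall_dual_of_mem_isCompact {𝕜 E : Type*} [RCLike 𝕜] [NormedAddCommGroup E]
    [NormedSpace 𝕜 E] {x : ℕ → E} {y : E} {C : Set E} (hC : IsCompact C) (hx : ∀ n, x n ∈ C)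
    (h : ∀ f : StrongDual 𝕜 E, Tendsto (fun n => f (x n)) atTop (𝓝 (f y))) :
    Tendsto x atTop (𝓝 y) := by
  refine tendsto_of_subseq_tendsto fun ns hns => ?_
  obtain ⟨z, -, ms, hms, hlim⟩ := hC.tendsto_subseq fun n => hx (ns n)
  have hzy : z = y := by
    refine sub_eq_zero.mp (SeparatingDual.eq_zero_of_forall_dual_eq_zero (R := 𝕜) fun f => ?_)
    rw [map_sub, sub_eq_zero]
    exact tendsto_nhds_unique ((f.continuous.tendsto z).comp hlim)
      ((h f).comp (hns.comp hms.tendsto_atTop))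
  exact ⟨ms, hzy ▸ hlim⟩

theorem totallyBounded_biUnion_image_closedBall {𝕜 E F : Type*} [NontriviallyNormedField 𝕜]
    [NormedAddCommGroup E] [NormedSpace 𝕜 E] [NormedAddCommGroup F] [NormedSpace 𝕜 F]
    {S : Set (E →L[𝕜] F)} (hS : IsCompact S) (hSc : ∀ A ∈ S, IsCompactOperator A) :
    TotallyBounded (⋃ A ∈ S, A '' closedBall 0 1) := by
  rw [Metric.totallyBounded_iff]
  intro ε hε
  obtain ⟨N, hNS, hNfin, hSN⟩ := hS.finite_cover_balls (half_pos hε)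
  have hN : TotallyBounded (⋃ A ∈ N, A '' closedBall 0 1) :=
    (totallyBounded_biUnion hNfin).mpr fun A hA =>
      ((hSc A (hNS hA)).isCompact_closure_image_closedBall 1).totallyBounded.subset subset_closure
  obtain ⟨t, htfin, hNt⟩ := Metric.totallyBounded_iff.mp hN _ (half_pos hε)
  refine ⟨t, htfin, ?_⟩
  simp only [subset_def, mem_iUnion, mem_image, exists_prop] at hSN hNt ⊢
  rintro _ ⟨A', hA', w, hw, rfl⟩
  obtain ⟨A, hA, hAA'⟩ := hSN A' hA'
  obtain ⟨y, hy, hAy⟩ := hNt (A w) ⟨A, hA, w, hw, rfl⟩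
  refine ⟨y, hy, ?_⟩
  have hw1 : ‖w‖ ≤ 1 := by simpa using hw
  have : dist (A' w) (A w) < ε / 2 := by
    rw [dist_eq_norm, ← sub_apply]
    calc ‖(A' - A) w‖ ≤ ‖A' - A‖ * ‖w‖ := (A' - A).le_opNorm w
      _ ≤ ‖A' - A‖ := mul_le_of_le_one_right (norm_nonneg _) hw1
      _ < ε / 2 := by rwa [← dist_eq_norm]
  rw [mem_ball] at hAy ⊢
  linarith [dist_triangle (A' w) (A w) y]

theorem integral_mem_smul_of_ae_mem_smul {α E : Type*} [MeasurableSpace α] {μ : Measure α}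
    [NormedAddCommGroup E] [NormedSpace ℝ E] [CompleteSpace E] {D : Set E}
    (hD : Convex ℝ D) (hDc : IsClosed D) (hD0 : (0 : E) ∈ D) {ψ : α → ℝ}
    (hψ : Integrable ψ μ) (hψ0 : 0 ≤ᵐ[μ] ψ) {F : α → E} (hF : Integrable F μ)
    (hFD : ∀ᵐ x ∂μ, F x ∈ ψ x • D) : ∫ x, F x ∂μ ∈ (∫ x, ψ x ∂μ) • D := by
  set w : α → ℝ≥0 := fun x => (ψ x).toNNReal
  have hw : AEMeasurable w μ := hψ.aemeasurable.real_toNNReal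
  -- `ν` is the measure `ψ μ`, against which `F` has the density `ψ⁻¹ • F` taking values in `D`
  set ν := μ.withDensity fun x => (w x : ℝ≥0∞)
  have hwF : (fun x => w x • (ψ x)⁻¹ • F x) =ᵐ[μ] F := by
    filter_upwards [hψ0, hFD] with x hx hxD
    rw [NNReal.smul_def, Real.coe_toNNReal _ hx]
    rcases eq_or_ne (ψ x) 0 with h0 | h0
    · simp_all [zero_smul_set ⟨0, hD0⟩]
    · rw [smul_inv_smul₀ h0]
  have hνuniv : ν univ = ENNReal.ofReal (∫ x, ψ x ∂μ) := by
    rw [withDensity_apply _ MeasurableSet.univ, Measure.restrict_univ,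
      ofReal_integral_eq_lintegral_ofReal hψ hψ0]
    rfl
  have : IsFiniteMeasure ν := ⟨by simp [hνuniv]⟩
  have hFν : ∫ x, F x ∂μ = ∫ x, (ψ x)⁻¹ • F x ∂ν := by
    rw [integral_withDensity_eq_integral_smul₀ hw]
    exact integral_congr_ae hwF.symm
  rcases eq_zero_or_neZero ν with hν | hν
  · simpa [hFν, hν] using smul_mem_smul_set (a := ∫ x, ψ x ∂μ) hD0
  have hint : Integrable (fun x => (ψ x)⁻¹ • F x) ν :=
    (integrable_withDensity_iff_integrable_smul₀ hw).mpr (hF.congr hwF.symm)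
  have hmem : ⨍ x, (ψ x)⁻¹ • F x ∂ν ∈ D := by
    refine hD.average_mem hDc ((withDensity_absolutelyContinuous μ _).ae_le ?_) hint
    filter_upwards [hFD] with x hx
    rcases eq_or_ne (ψ x) 0 with h0 | h0
    · simpa [h0] using hD0
    · exact (mem_smul_set_iff_inv_smul_mem₀ h0 _ _).mp hx
  rw [hFν, ← measure_smul_average (μ := ν), measureReal_def, hνuniv,
    ENNReal.toReal_ofReal (integral_nonneg_of_ae hψ0)]
  exact smul_mem_smul_set hmem

theorem tendsto_integral_apply_sub_of_weak {ι α E : Type*} [MeasurableSpace α] {μ : Measure α}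
    [NormedAddCommGroup E] [NormedSpace ℝ E] {l : Filter ι}
    {g : ι → α → E} {g₀ : α → E} (hg : ∀ n, MemLp (g n) 1 μ) (hg₀ : MemLp g₀ 1 μ)
    (hweak : ∀ Φ : Lp E 1 μ →L[ℝ] ℝ,
      Tendsto (fun n => Φ ((hg n).toLp (g n))) l (𝓝 (Φ (hg₀.toLp g₀))))
    {k : α → StrongDual ℝ E} (hk : MemLp k ∞ μ) :
    Tendsto (fun n => ∫ x, k x (g n x - g₀ x) ∂μ) l (𝓝 0) := by
  set Φ := ContinuousLinearMap.lpPairing μ ∞ 1 (ContinuousLinearMap.id ℝ (StrongDual ℝ E))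
    (hk.toLp k)
  have hΦ : ∀ (f : α → E) (hf : MemLp f 1 μ), Φ (hf.toLp f) = ∫ x, k x (f x) ∂μ := by
    intro f hf
    rw [ContinuousLinearMap.lpPairing_eq_integral]
    refine integral_congr_ae ?_
    filter_upwards [hk.coeFn_toLp, hf.coeFn_toLp] with x hkx hfx
    simp [hkx, hfx]
  have := (hweak Φ).sub_const (Φ (hg₀.toLp g₀))
  rw [sub_self] at this
  refine this.congr fun n => ?_
  have hint : ∀ f : α → E, MemLp f 1 μ → Integrable (fun x => k x (f x)) μ := fun f hf =>
    memLp_one_iff_integrable.mp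
      ((ContinuousLinearMap.id ℝ (StrongDual ℝ E)).memLp_of_bilin 1 hk hf)
  rw [hΦ, hΦ, ← integral_sub (hint _ (hg n)) (hint _ hg₀)]
  simp_rw [map_sub]

theorem exists_pos_forall_setIntegral_Ioc_lt {μ : Measure ℝ} (hμ : μ ≤ volume) {ψ : ℝ → ℝ}
    (hψ : Integrable ψ μ) {ε : ℝ} (hε : 0 < ε) :
    ∃ η > 0, ∀ a b, dist a b < η → ∫ s in Ioc a b, ψ s ∂μ < ε := by
  let l := comap (fun p : ℝ × ℝ => p.2 - p.1) (𝓝 0)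
  have hlen : Tendsto (fun p : ℝ × ℝ => ENNReal.ofReal (p.2 - p.1)) l (𝓝 0) := by
    rw [← ENNReal.ofReal_zero]
    exact (ENNReal.continuous_ofReal.tendsto 0).comp tendsto_comap
  have hμIoc : Tendsto (fun p : ℝ × ℝ => μ (Ioc p.1 p.2)) l (𝓝 0) :=
    tendsto_of_tendsto_of_tendsto_of_le_of_le tendsto_const_nhds hlen (fun _ => zero_le)
      fun p => (Measure.le_iff'.mp hμ _).trans Real.volume_Ioc.le
  obtain ⟨η, hη, hsmall⟩ := ((nhds_basis_ball.comap _).tendsto_left_iff).mp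
    (hψ.tendsto_setIntegral_nhds_zero hμIoc) _ (Iio_mem_nhds hε)
  refine ⟨η, hη, fun a b hab => hsmall (x := (a, b)) ?_⟩
  simpa [Real.dist_eq, abs_sub_comm] using hab

theorem norm_intervalIntegral_le_mul_setIntegral {F : Type*} [NormedAddCommGroup F]
    [NormedSpace ℝ F] {μ : Measure ℝ} {f : ℝ → F} {ψ : ℝ → ℝ} (hψ : Integrable ψ μ) {C : ℝ}
    (hf : ∀ᵐ s ∂μ, ‖f s‖ ≤ C * ψ s) (a b : ℝ) :
    ‖∫ s in a..b, f s ∂μ‖ ≤ C * ∫ s in Ι a b, ψ s ∂μ := by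
  rw [intervalIntegral.norm_integral_eq_norm_integral_uIoc, ← integral_const_mul]
  exact norm_integral_le_of_norm_le (hψ.const_mul C).integrableOn (ae_restrict_of_ae hf)

theorem continuous_prod_apply_of_nnnorm_le {X E F : Type*} [TopologicalSpace X]
    [NormedAddCommGroup E] [NormedSpace ℝ E] [NormedAddCommGroup F] [NormedSpace ℝ F]
    {H : X → E →L[ℝ] F} {M : ℝ≥0} (hM : ∀ x, ‖H x‖₊ ≤ M) (hH : ∀ w, Continuous fun x => H x w) :
    Continuous fun p : X × E => H p.1 p.2 :=
  continuous_prod_of_continuous_lipschitzWith' _ M (fun x => (H x).lipschitz.weaken (hM x)) hH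

theorem uniformContinuous_IccExtend_domRestrict {X : Type*} [UniformSpace X] {f : ℝ → X} {a b : ℝ}
    (hab : a ≤ b) (hf : ContinuousOn f (Icc a b)) :
    UniformContinuous (IccExtend hab ((Icc a b).domRestrict f)) :=
  (CompactSpace.uniformContinuous_of_continuous hf.domRestrict).comp
    (LipschitzWith.projIcc hab).uniformContinuous

theorem IccExtend_domRestrict_eq_of_le {α β : Type*} [LinearOrder α] {f : α → β} {a b c : α}
    (hac : a ≤ c) (hcb : c ≤ b) {x : α} (hx : c ≤ x) :
    IccExtend (hac.trans hcb) ((Icc a b).domRestrict f) x =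
      IccExtend hcb ((Icc c b).domRestrict f) x := by
  rcases le_total x b with hxb | hxb
  · rw [IccExtend_of_mem _ _ ⟨hac.trans hx, hxb⟩, IccExtend_of_mem _ _ ⟨hx, hxb⟩]; rfl
  · rw [IccExtend_of_right_le _ _ hxb, IccExtend_of_right_le _ _ hxb]; rfl

section Volterra

variable {E F : Type*} [NormedAddCommGroup E] [NormedSpace ℝ E] [NormedAddCommGroup F]
  [NormedSpace ℝ F]

noncomputable def volterra (μ : Measure ℝ) (K : ℝ → E →L[ℝ] F) (h : ℝ → E) (t : ℝ) : F :=
  ∫ s in (0 : ℝ)..t, K (t - s) (h s) ∂μ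

theorem integrable_volterra_integrand {μ : Measure ℝ} {K : ℝ → E →L[ℝ] F}
    (hK : Continuous fun p : ℝ × E => K p.1 p.2) {M : ℝ} (hM : ∀ τ, ‖K τ‖ ≤ M) {h : ℝ → E}
    (hh : Integrable h μ) (t : ℝ) : Integrable (fun s => K (t - s) (h s)) μ := by
  refine (hh.norm.const_mul M).mono' ?_ (ae_of_all _ fun s => ?_)
  · exact hK.comp_aestronglyMeasurable
      ((measurable_const.sub measurable_id).aestronglyMeasurable.prodMk hh.1)
  · exact (K (t - s)).le_of_opNorm_le (hM _) _

theorem norm_volterra_apply_sub_apply_le [CompleteSpace F] {μ : Measure ℝ}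
    {K : ℝ → E →L[ℝ] F} (hK : Continuous K) {M : ℝ} (hM : ∀ τ, ‖K τ‖ ≤ M) {ψ : ℝ → ℝ}
    (hψ : Integrable ψ μ) (hψ0 : 0 ≤ᵐ[μ] ψ) {h : ℝ → E} (hh : Integrable h μ)
    (hhψ : ∀ᵐ s ∂μ, ‖h s‖ ≤ ψ s) {t t' ω : ℝ} (hω : ∀ s, ‖K (t - s) - K (t' - s)‖ ≤ ω) :
    ‖volterra μ K h t - volterra μ K h t'‖ ≤ ω * ∫ s, ψ s ∂μ + M * ∫ s in Ι t' t, ψ s ∂μ := by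
  have hKc : Continuous fun p : ℝ × E => K p.1 p.2 :=
    (hK.comp continuous_fst).clm_apply continuous_snd
  have hint : ∀ x a b, IntervalIntegrable (fun s => K (x - s) (h s)) μ a b := fun x _ _ =>
    (integrable_volterra_integrand hKc hM hh x).intervalIntegrable
  have hsplit : volterra μ K h t - volterra μ K h t' =
      (∫ s in (0 : ℝ)..t', (K (t - s) - K (t' - s)) (h s) ∂μ) +
        ∫ s in t'..t, K (t - s) (h s) ∂μ := by
    simp only [volterra, sub_apply]
    rw [intervalIntegral.integral_sub (hint _ _ _) (hint _ _ _),
      ← intervalIntegral.integral_add_adjacent_intervals (hint t 0 t') (hint t t' t)]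
    abel
  have hkernel : ‖∫ s in (0 : ℝ)..t', (K (t - s) - K (t' - s)) (h s) ∂μ‖ ≤
      ω * ∫ s, ψ s ∂μ := by
    refine (norm_intervalIntegral_le_mul_setIntegral hψ (C := ω) ?_ 0 t').trans ?_
    · filter_upwards [hhψ] with s hs
      exact (K (t - s) - K (t' - s)).le_of_opNorm_le_of_le (hω s) hs
    · exact mul_le_mul_of_nonneg_left (setIntegral_le_integral hψ hψ0)
        ((norm_nonneg _).trans (hω 0))
  have hshort : ‖∫ s in t'..t, K (t - s) (h s) ∂μ‖ ≤ M * ∫ s in Ι t' t, ψ s ∂μ :=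
    norm_intervalIntegral_le_mul_setIntegral hψ
      (hhψ.mono fun s hs => (K (t - s)).le_of_opNorm_le_of_le (hM _) hs) t' t
  rw [hsplit]
  exact (norm_add_le _ _).trans (add_le_add hkernel hshort)

theorem uniformEquicontinuous_volterra [CompleteSpace F] {ι : Type*} {μ : Measure ℝ}
    (hμ : μ ≤ volume) {K : ℝ → E →L[ℝ] F} (hK : UniformContinuous K) {M : ℝ}
    (hM : ∀ τ, ‖K τ‖ ≤ M) {ψ : ℝ → ℝ} (hψ : Integrable ψ μ) (hψ0 : 0 ≤ᵐ[μ] ψ)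
    {h : ι → ℝ → E} (hh : ∀ i, Integrable (h i) μ) (hhψ : ∀ i, ∀ᵐ s ∂μ, ‖h i s‖ ≤ ψ s) :
    UniformEquicontinuous fun i => volterra μ K (h i) := by
  have hM0 : 0 ≤ M := (norm_nonneg _).trans (hM 0)
  set c := ∫ s, ψ s ∂μ
  have hc : 0 ≤ c := integral_nonneg_of_ae hψ0
  rw [Metric.uniformEquicontinuous_iff]
  intro ε hε
  obtain ⟨r, hr, hKr⟩ := Metric.uniformContinuous_iff.mp hK (ε / (2 * (c + 1))) (by positivity)
  obtain ⟨η, hη, hψη⟩ := exists_pos_forall_setIntegral_Ioc_lt hμ hψ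
    (ε := ε / (2 * (M + 1))) (by positivity)
  refine ⟨min r η, lt_min hr hη, fun t t' htt' i => ?_⟩
  have hω : ∀ s, ‖K (t - s) - K (t' - s)‖ ≤ ε / (2 * (c + 1)) := fun s => by
    rw [← dist_eq_norm]
    refine (hKr ?_).le
    rw [Real.dist_eq, sub_sub_sub_cancel_right, ← Real.dist_eq]
    exact htt'.trans_le (min_le_left _ _)
  have hlen : dist (min t' t) (max t' t) < η := by
    rw [Real.dist_eq, abs_sub_comm, max_sub_min_eq_abs', abs_abs, abs_sub_comm, ← Real.dist_eq]
    exact htt'.trans_le (min_le_right _ _)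
  rw [dist_eq_norm]
  calc _ ≤ ε / (2 * (c + 1)) * c + M * ∫ s in Ι t' t, ψ s ∂μ :=
        norm_volterra_apply_sub_apply_le hK.continuous hM hψ hψ0 (hh i) (hhψ i) hω
    _ ≤ ε / (2 * (c + 1)) * c + M * (ε / (2 * (M + 1))) := by
        gcongr
        exact (hψη _ _ hlen).le
    _ < ε := by
        have h1 : ε / (2 * (c + 1)) * c < ε / 2 := by
          rw [div_mul_eq_mul_div, div_lt_div_iff₀ (by positivity) two_pos]
          nlinarith
        have h2 : M * (ε / (2 * (M + 1))) ≤ ε / 2 := by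
          rw [← mul_div_assoc, div_le_div_iff₀ (by positivity) two_pos]
          nlinarith
        linarith

theorem volterra_mem_smul_closure_convexHull [CompleteSpace F] {μ : Measure ℝ}
    {K : ℝ → E →L[ℝ] F} (hK : Continuous K) {M : ℝ} (hM : ∀ τ, ‖K τ‖ ≤ M) {ψ : ℝ → ℝ}
    (hψ : Integrable ψ μ) (hψ0 : 0 ≤ᵐ[μ] ψ) {h : ℝ → E} (hh : Integrable h μ)
    (hhψ : ∀ᵐ s ∂μ, ‖h s‖ ≤ ψ s) {t : ℝ} (ht : 0 ≤ t) :
    volterra μ K h t ∈ (∫ s in Ioc 0 t, ψ s ∂μ) •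
      closure (convexHull ℝ (insert 0 (⋃ A ∈ range K, A '' closedBall (0 : E) 1))) := by
  rw [volterra, intervalIntegral.integral_of_le ht]
  refine integral_mem_smul_of_ae_mem_smul (convex_convexHull ℝ _).closure isClosed_closure
    (subset_closure (subset_convexHull ℝ _ (mem_insert 0 _))) hψ.integrableOn
    (ae_restrict_of_ae hψ0) (integrable_volterra_integrand
      ((hK.comp continuous_fst).clm_apply continuous_snd) hM hh t).integrableOn
    (ae_restrict_of_ae ?_)
  filter_upwards [hψ0, hhψ] with s hs0 hs
  obtain ⟨w, hw, hws⟩ : h s ∈ ψ s • closedBall (0 : E) 1 := by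
    rwa [smul_unitClosedBall_of_nonneg hs0, mem_closedBall_zero_iff]
  rw [← hws, map_smul]
  exact smul_mem_smul_set <| subset_closure <| subset_convexHull ℝ _ <| mem_insert_of_mem _ <|
    mem_biUnion (mem_range_self _) (mem_image_of_mem _ hw)

theorem apply_volterra_eq_integral_indicator [CompleteSpace F] {μ : Measure ℝ}
    {K : ℝ → E →L[ℝ] F} (hK : Continuous K) {M : ℝ} (hM : ∀ τ, ‖K τ‖ ≤ M) {h : ℝ → E}
    (hh : Integrable h μ) {t : ℝ} (ht : 0 ≤ t) (f : StrongDual ℝ F) :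
    f (volterra μ K h t) = ∫ s, (Ioc 0 t).indicator (fun s => f ∘L K (t - s)) s (h s) ∂μ := by
  rw [volterra, intervalIntegral.integral_of_le ht, ← f.integral_comp_comm
      (integrable_volterra_integrand ((hK.comp continuous_fst).clm_apply continuous_snd) hM hh
        t).integrableOn, ← integral_indicator measurableSet_Ioc]
  congr 1 with s
  by_cases hs : s ∈ Ioc 0 t <;> simp [hs]

theorem tendsto_volterra_of_weak [CompleteSpace F] {μ : Measure ℝ} {K : ℝ → E →L[ℝ] F}
    (hK : Continuous K) (hKr : IsCompact (range K)) (hKc : ∀ τ, IsCompactOperator (K τ))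
    {ψ : ℝ → ℝ} (hψ : Integrable ψ μ) (hψ0 : 0 ≤ᵐ[μ] ψ) {h : ℕ → ℝ → E}
    (hh : ∀ n, Integrable (h n) μ) (hhψ : ∀ n, ∀ᵐ s ∂μ, ‖h n s‖ ≤ ψ s)
    (hweak : ∀ k : ℝ → StrongDual ℝ E, MemLp k ∞ μ →
      Tendsto (fun n => ∫ s, k s (h n s) ∂μ) atTop (𝓝 0))
    {t : ℝ} (ht : 0 ≤ t) : Tendsto (fun n => volterra μ K (h n) t) atTop (𝓝 0) := by
  obtain ⟨M, hM⟩ := hKr.isBounded.exists_norm_le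
  replace hM : ∀ τ, ‖K τ‖ ≤ M := fun τ => hM _ (mem_range_self τ)
  have hD : IsCompact (closure (convexHull ℝ (insert 0 (⋃ A ∈ range K, A '' closedBall 0 1)))) :=
    (totallyBounded_convexHull.mpr ((totallyBounded_insert 0).mpr
      (totallyBounded_biUnion_image_closedBall hKr (forall_mem_range.2 hKc)))).closure
      |>.isCompact_of_isClosed isClosed_closure
  refine tendsto_of_forall_dual_of_mem_isCompact (𝕜 := ℝ) (hD.smul _)
    (fun n => volterra_mem_smul_closure_convexHull hK hM hψ hψ0 (hh n) (hhψ n) ht) fun f => ?_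
  have hk : MemLp ((Ioc 0 t).indicator fun s => f ∘L K (t - s)) ∞ μ := by
    refine memLp_top_of_bound (((continuous_const.clm_comp
      (hK.comp (continuous_const.sub continuous_id))).aestronglyMeasurable).indicator
      measurableSet_Ioc) (‖f‖ * M) (ae_of_all _ fun s => ?_)
    refine (norm_indicator_le_norm_self _ _).trans ?_
    exact (f.opNorm_comp_le _).trans (mul_le_mul_of_nonneg_left (hM _) (norm_nonneg _))
  simpa [apply_volterra_eq_integral_indicator hK hM (hh _) ht f] using hweak _ hk

theorem tendstoUniformlyOn_volterra_of_weak [CompleteSpace F] {μ : Measure ℝ}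
    (hμ : μ ≤ volume) {K : ℝ → E →L[ℝ] F} (hK : UniformContinuous K)
    (hKr : IsCompact (range K)) (hKc : ∀ τ, IsCompactOperator (K τ))
    {ψ : ℝ → ℝ} (hψ : Integrable ψ μ) (hψ0 : 0 ≤ᵐ[μ] ψ) {h : ℕ → ℝ → E}
    (hh : ∀ n, Integrable (h n) μ) (hhψ : ∀ n, ∀ᵐ s ∂μ, ‖h n s‖ ≤ ψ s)
    (hweak : ∀ k : ℝ → StrongDual ℝ E, MemLp k ∞ μ →
      Tendsto (fun n => ∫ s, k s (h n s) ∂μ) atTop (𝓝 0))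
    {S : Set ℝ} (hS : IsCompact S) (hS0 : S ⊆ Ici 0) :
    TendstoUniformlyOn (fun n => volterra μ K (h n)) 0 atTop S := by
  obtain ⟨M, hM⟩ := hKr.isBounded.exists_norm_le
  refine EquicontinuousOn.tendstoUniformlyOn_of_forall_tendsto hS ?_ fun t ht =>
    tendsto_volterra_of_weak hK.continuous hKr hKc hψ hψ0 hh hhψ hweak (hS0 ht)
  exact (uniformEquicontinuous_volterra hμ hK (fun τ => hM _ (mem_range_self τ)) hψ hψ0 hh
    hhψ).equicontinuous.equicontinuousOn S

theorem norm_volterra_sub_volterra_le [CompleteSpace F] {μ : Measure ℝ} {H K : ℝ → E →L[ℝ] F}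
    {δ M : ℝ} (hHK : ∀ τ, δ ≤ τ → H τ = K τ) (hH : ∀ τ, ‖H τ‖ ≤ M) (hK : ∀ τ, ‖K τ‖ ≤ M)
    {ψ : ℝ → ℝ} (hψ : Integrable ψ μ) (hψ0 : 0 ≤ᵐ[μ] ψ) {h : ℝ → E}
    (hhψ : ∀ᵐ s ∂μ, ‖h s‖ ≤ ψ s) {t : ℝ} (ht : 0 ≤ t)
    (hHi : Integrable (fun s => H (t - s) (h s)) μ)
    (hKi : Integrable (fun s => K (t - s) (h s)) μ) :
    ‖volterra μ H h t - volterra μ K h t‖ ≤ 2 * M * ∫ s in Ioc (t - δ) t, ψ s ∂μ := by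
  have hbound : ∀ᵐ s ∂μ.restrict (Ioc 0 t), ‖(H (t - s) - K (t - s)) (h s)‖ ≤
      (Ioc (t - δ) t).indicator (fun s => 2 * M * ψ s) s := by
    filter_upwards [ae_restrict_mem measurableSet_Ioc, ae_restrict_of_ae hhψ] with s hs0t hs
    by_cases hsδ : s ∈ Ioc (t - δ) t
    · rw [indicator_of_mem hsδ]
      refine (H (t - s) - K (t - s)).le_of_opNorm_le_of_le ?_ hs
      exact (norm_sub_le _ _).trans (by linarith [hH (t - s), hK (t - s)])
    · have : δ ≤ t - s := by
        simp only [mem_Ioc, not_and_or, not_lt, not_le] at hsδ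
        rcases hsδ with h | h <;> linarith [hs0t.2]
      rw [indicator_of_notMem hsδ, hHK _ this, sub_self, zero_apply, norm_zero]
  rw [volterra, volterra, ← intervalIntegral.integral_sub hHi.intervalIntegrable
    hKi.intervalIntegrable, intervalIntegral.integral_of_le ht]
  refine (norm_integral_le_of_norm_le ((hψ.const_mul _).indicator measurableSet_Ioc).integrableOn
    hbound).trans ?_
  rw [setIntegral_indicator measurableSet_Ioc, integral_const_mul]
  have hM : 0 ≤ 2 * M := by linarith [(norm_nonneg _).trans (hH 0)]
  exact mul_le_mul_of_nonneg_left (setIntegral_mono_set hψ.integrableOn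
    (ae_restrict_of_ae hψ0) inter_subset_right.eventuallyLE) hM

theorem volterra_sub [CompleteSpace F] {μ : Measure ℝ} {K : ℝ → E →L[ℝ] F} {u v : ℝ → E} {t : ℝ}
    (hu : Integrable (fun s => K (t - s) (u s)) μ) (hv : Integrable (fun s => K (t - s) (v s)) μ) :
    volterra μ K (u - v) t = volterra μ K u t - volterra μ K v t := by
  simp only [volterra, Pi.sub_apply, map_sub]
  exact intervalIntegral.integral_sub hu.intervalIntegrable hv.intervalIntegrable

end Volterra

section StronglyContinuous

variable {E F : Type*} [NormedAddCommGroup E] [NormedSpace ℝ E] [NormedAddCommGroup F]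
  [NormedSpace ℝ F] {G : ℝ → E →L[ℝ] F} {a b T : ℝ}

theorem exists_nnnorm_IccExtend_domRestrict_le [CompleteSpace E] (hab : a ≤ b)
    (hG : ∀ w, ContinuousOn (fun t => G t w) (Icc a b)) :
    ∃ M : ℝ≥0, ∀ τ, ‖IccExtend hab ((Icc a b).domRestrict G) τ‖₊ ≤ M := by
  obtain ⟨C, hC⟩ := banach_steinhaus (g := (Icc a b).domRestrict G) fun w => by
    obtain ⟨C, hC⟩ := isCompact_Icc.exists_bound_of_continuousOn (hG w)
    exact ⟨C, fun τ => hC τ τ.2⟩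
  exact ⟨C.toNNReal, fun τ => by
    rw [← NNReal.coe_le_coe, coe_nnnorm]
    exact (hC _).trans (Real.le_coe_toNNReal C)⟩

theorem integrable_volterra_integrand_IccExtend [CompleteSpace E] {μ : Measure ℝ} (hab : a ≤ b)
    (hG : ∀ w, ContinuousOn (fun t => G t w) (Icc a b)) {h : ℝ → E} (hh : Integrable h μ)
    (t : ℝ) : Integrable (fun s => IccExtend hab ((Icc a b).domRestrict G) (t - s) (h s)) μ := by
  obtain ⟨M, hM⟩ := exists_nnnorm_IccExtend_domRestrict_le hab hG
  exact integrable_volterra_integrand (continuous_prod_apply_of_nnnorm_le hM fun w =>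
    continuous_IccExtend_iff.mpr (hG w).domRestrict) (fun τ => by exact_mod_cast hM τ) hh t

theorem tendstoUniformlyOn_volterra_IccExtend_of_pos [CompleteSpace F] {μ : Measure ℝ}
    (hμ : μ ≤ volume) {δ : ℝ} (hδ : 0 < δ) (hδT : δ ≤ T)
    (hGcpt : ∀ t ∈ Ioc (0 : ℝ) T, IsCompactOperator (G t)) (hGnorm : ContinuousOn G (Ioc 0 T))
    {ψ : ℝ → ℝ} (hψ : Integrable ψ μ) (hψ0 : 0 ≤ᵐ[μ] ψ) {h : ℕ → ℝ → E}
    (hh : ∀ n, Integrable (h n) μ) (hhψ : ∀ n, ∀ᵐ s ∂μ, ‖h n s‖ ≤ ψ s)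
    (hweak : ∀ k : ℝ → StrongDual ℝ E, MemLp k ∞ μ →
      Tendsto (fun n => ∫ s, k s (h n s) ∂μ) atTop (𝓝 0)) :
    TendstoUniformlyOn (fun n => volterra μ (IccExtend hδT ((Icc δ T).domRestrict G)) (h n)) 0
      atTop (Icc 0 T) := by
  have hδIoc : Icc δ T ⊆ Ioc 0 T := fun τ hτ => ⟨hδ.trans_le hτ.1, hτ.2⟩
  refine tendstoUniformlyOn_volterra_of_weak hμ
    (uniformContinuous_IccExtend_domRestrict hδT (hGnorm.mono hδIoc)) ?_
    (fun τ => hGcpt _ (hδIoc (projIcc δ T hδT τ).2)) hψ hψ0 hh hhψ hweak isCompact_Icc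
    fun t ht => ht.1
  rw [IccExtend_range]
  exact isCompact_range (hGnorm.mono hδIoc).domRestrict

theorem norm_volterra_IccExtend_sub_le [CompleteSpace E] [CompleteSpace F] {μ : Measure ℝ}
    (hT : 0 ≤ T) (hGsc : ∀ w, ContinuousOn (fun t => G t w) (Icc 0 T)) {M : ℝ}
    (hM : ∀ τ, ‖IccExtend hT ((Icc 0 T).domRestrict G) τ‖ ≤ M) {δ : ℝ} (hδ : 0 ≤ δ)
    (hδT : δ ≤ T) {ψ : ℝ → ℝ} (hψ : Integrable ψ μ) (hψ0 : 0 ≤ᵐ[μ] ψ) {h : ℝ → E}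
    (hh : Integrable h μ) (hhψ : ∀ᵐ s ∂μ, ‖h s‖ ≤ ψ s) {t : ℝ} (ht : 0 ≤ t) :
    ‖volterra μ (IccExtend hT ((Icc 0 T).domRestrict G)) h t -
        volterra μ (IccExtend hδT ((Icc δ T).domRestrict G)) h t‖ ≤
      2 * M * ∫ s in Ioc (t - δ) t, ψ s ∂μ := by
  set H := IccExtend hT ((Icc 0 T).domRestrict G)
  set K := IccExtend hδT ((Icc δ T).domRestrict G)
  have hK : ∀ τ, ‖K τ‖ ≤ M := by
    have hKH : range K ⊆ range H := by
      simp only [K, H, IccExtend_range, range_domRestrict]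
      exact image_mono (Icc_subset_Icc_left hδ)
    intro τ
    obtain ⟨x, hx⟩ := hKH (mem_range_self τ)
    exact hx ▸ hM x
  exact norm_volterra_sub_volterra_le (fun τ => IccExtend_domRestrict_eq_of_le hδ hδT) hM hK hψ
    hψ0 hhψ ht (integrable_volterra_integrand_IccExtend hT hGsc hh t)
    (integrable_volterra_integrand_IccExtend hδT (fun w => (hGsc w).mono (Icc_subset_Icc_left hδ))
      hh t)

theorem tendstoUniformlyOn_volterra_IccExtend [CompleteSpace E] [CompleteSpace F]
    {μ : Measure ℝ} (hμ : μ ≤ volume) (hT : 0 < T)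
    (hGsc : ∀ w, ContinuousOn (fun t => G t w) (Icc 0 T))
    (hGcpt : ∀ t ∈ Ioc (0 : ℝ) T, IsCompactOperator (G t)) (hGnorm : ContinuousOn G (Ioc 0 T))
    {ψ : ℝ → ℝ} (hψ : Integrable ψ μ) (hψ0 : 0 ≤ᵐ[μ] ψ) {h : ℕ → ℝ → E}
    (hh : ∀ n, Integrable (h n) μ) (hhψ : ∀ n, ∀ᵐ s ∂μ, ‖h n s‖ ≤ ψ s)
    (hweak : ∀ k : ℝ → StrongDual ℝ E, MemLp k ∞ μ →
      Tendsto (fun n => ∫ s, k s (h n s) ∂μ) atTop (𝓝 0)) :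
    TendstoUniformlyOn (fun n => volterra μ (IccExtend hT.le ((Icc 0 T).domRestrict G)) (h n)) 0
      atTop (Icc 0 T) := by
  obtain ⟨M, hM⟩ := exists_nnnorm_IccExtend_domRestrict_le hT.le hGsc
  replace hM : ∀ τ, ‖IccExtend hT.le ((Icc 0 T).domRestrict G) τ‖ ≤ M := fun τ => by
    exact_mod_cast hM τ
  refine tendstoUniformlyOn_of_forall_exists_approx fun ε hε => ?_
  obtain ⟨η, hη, hψη⟩ := exists_pos_forall_setIntegral_Ioc_lt hμ hψ
    (ε := ε / (2 * M + 1)) (by positivity)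
  -- freezing the kernel below `δ < η` changes `volterra` by at most `2M ∫_{t-δ}^t ψ ≤ ε`
  set δ := min (η / 2) T
  have hδ : 0 < δ := lt_min (half_pos hη) hT
  have hδT : δ ≤ T := min_le_right _ _
  refine ⟨_, tendstoUniformlyOn_volterra_IccExtend_of_pos hμ hδ hδT hGcpt hGnorm hψ hψ0 hh hhψ
    hweak, fun n t ht => ?_⟩
  rw [dist_eq_norm]
  calc _ ≤ 2 * M * ∫ s in Ioc (t - δ) t, ψ s ∂μ :=
        norm_volterra_IccExtend_sub_le hT.le hGsc hM hδ.le hδT hψ hψ0 (hh n) (hhψ n) ht.1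
    _ ≤ 2 * M * (ε / (2 * M + 1)) := by
        refine mul_le_mul_of_nonneg_left (hψη _ _ ?_).le (by positivity)
        rw [Real.dist_eq, sub_sub_cancel_left, abs_neg, abs_of_pos hδ]
        exact (min_le_left _ _).trans_lt (half_lt_self hη)
    _ ≤ ε := by
        rw [← mul_div_assoc, div_le_iff₀ (by positivity)]
        nlinarith

theorem intervalIntegral_eq_volterra_IccExtend (hT : 0 ≤ T) (u : ℝ → E) {t : ℝ}
    (ht : t ∈ Icc 0 T) :
    ∫ s in (0 : ℝ)..t, G (t - s) (u s) =
      volterra (volume.restrict (Icc 0 T)) (IccExtend hT ((Icc 0 T).domRestrict G)) u t := by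
  rw [volterra, intervalIntegral.integral_of_le ht.1, intervalIntegral.integral_of_le ht.1,
    Measure.restrict_restrict measurableSet_Ioc,
    inter_eq_left.mpr (Ioc_subset_Icc_self.trans (Icc_subset_Icc_right ht.2))]
  refine setIntegral_congr_fun measurableSet_Ioc fun s hs => ?_
  rw [IccExtend_of_mem _ _ ⟨by linarith [hs.2], by linarith [hs.1, ht.2]⟩]
  rfl

end StronglyContinuous

theorem stmt_18_general {W : Type*}
    [NormedAddCommGroup W] [NormedSpace ℝ W] [CompleteSpace W]
    (T : ℝ) (hT : 0 < T)
    (G : ℝ → W →L[ℝ] W)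
    (hGsc : ∀ w : W, ContinuousOn (fun t : ℝ => G t w) (Set.Icc 0 T))
    (hGcpt : ∀ t ∈ Set.Ioc (0 : ℝ) T, IsCompactOperator (⇑(G t)))
    (hGnorm : ContinuousOn G (Set.Ioc 0 T))
    (g : ℕ → ℝ → W) (g₀ : ℝ → W)
    (hgn : ∀ n : ℕ, MemLp (g n) 1 (volume.restrict (Set.Icc (0 : ℝ) T)))
    (hg₀ : MemLp g₀ 1 (volume.restrict (Set.Icc (0 : ℝ) T)))
    (φ : ℝ → ℝ) (hφint : Integrable φ (volume.restrict (Set.Icc (0 : ℝ) T)))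
    (hφpos : ∀ t : ℝ, 0 ≤ φ t)
    (hbdd : ∀ n : ℕ, ∀ᵐ t ∂(volume.restrict (Set.Icc (0 : ℝ) T)), ‖g n t‖ ≤ φ t)
    (hweak : ∀ Φ : (Lp W 1 (volume.restrict (Set.Icc (0 : ℝ) T))) →L[ℝ] ℝ,
      Tendsto (fun n : ℕ => Φ ((hgn n).toLp (g n))) atTop (nhds (Φ (hg₀.toLp g₀)))) :
    TendstoUniformlyOn
      (fun (n : ℕ) (t : ℝ) => ∫ s in (0 : ℝ)..t, G (t - s) (g n s))
      (fun t : ℝ => ∫ s in (0 : ℝ)..t, G (t - s) (g₀ s))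
      atTop (Set.Icc 0 T) := by
  set μ := volume.restrict (Icc (0 : ℝ) T)
  have hgi : ∀ n, Integrable (g n) μ := fun n => memLp_one_iff_integrable.mp (hgn n)
  have hg₀i : Integrable g₀ μ := memLp_one_iff_integrable.mp hg₀
  have key := tendstoUniformlyOn_volterra_IccExtend Measure.restrict_le_self hT hGsc hGcpt hGnorm
    (hφint.add hg₀i.norm) (ae_of_all _ fun s => add_nonneg (hφpos s) (norm_nonneg _))
    (fun n => (hgi n).sub hg₀i)
    (fun n => (hbdd n).mono fun s hs => (norm_sub_le _ _).trans (add_le_add_left hs _))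
    fun k hk => tendsto_integral_apply_sub_of_weak hgn hg₀ hweak hk
  rw [Metric.tendstoUniformlyOn_iff] at key ⊢
  intro ε hε
  filter_upwards [key ε hε] with n hn t ht
  rw [intervalIntegral_eq_volterra_IccExtend hT.le _ ht,
    intervalIntegral_eq_volterra_IccExtend hT.le _ ht, dist_comm, dist_eq_norm,
    ← volterra_sub (integrable_volterra_integrand_IccExtend hT.le hGsc (hgi n) t)
      (integrable_volterra_integrand_IccExtend hT.le hGsc hg₀i t)]
  simpa only [Pi.zero_apply, dist_zero_left] using hn t ht

/-- if `(gₙ) ⊂ L¹([0,T];W)` is integrably bounded and `gₙ ⇀ g` weakly in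
`L¹([0,T];W)`, then `𝒢 gₙ → 𝒢 g` in `C([0,T];W)`, i.e.
`sup_{t∈[0,T]} ‖∫₀ᵗ G(t-s)(gₙ(s) - g(s)) ds‖ → 0`. -/
theorem stmt_18 {W : Type*}
    [NormedAddCommGroup W] [NormedSpace ℝ W] [CompleteSpace W]
    (T : ℝ) (hT : 0 < T)
    (G : ℝ → W →L[ℝ] W)
    (hGsc : ∀ w : W, ContinuousOn (fun t : ℝ => G t w) (Set.Icc 0 T))
    (hG0 : G 0 = 1)
    (hGcpt : ∀ t ∈ Set.Ioc (0 : ℝ) T, IsCompactOperator (⇑(G t)))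
    (hGnorm : ContinuousOn G (Set.Ioc 0 T))
    (g : ℕ → ℝ → W) (g₀ : ℝ → W)
    (hgn : ∀ n : ℕ, MemLp (g n) 1 (volume.restrict (Set.Icc (0 : ℝ) T)))
    (hg₀ : MemLp g₀ 1 (volume.restrict (Set.Icc (0 : ℝ) T)))
    (φ : ℝ → ℝ) (hφint : Integrable φ (volume.restrict (Set.Icc (0 : ℝ) T)))
    (hφpos : ∀ t : ℝ, 0 ≤ φ t)
    (hbdd : ∀ n : ℕ, ∀ᵐ t ∂(volume.restrict (Set.Icc (0 : ℝ) T)), ‖g n t‖ ≤ φ t)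
    (hweak : ∀ Φ : (Lp W 1 (volume.restrict (Set.Icc (0 : ℝ) T))) →L[ℝ] ℝ,
      Tendsto (fun n : ℕ => Φ ((hgn n).toLp (g n))) atTop (nhds (Φ (hg₀.toLp g₀)))) :
    TendstoUniformlyOn
      (fun (n : ℕ) (t : ℝ) => ∫ s in (0 : ℝ)..t, G (t - s) (g n s))
      (fun t : ℝ => ∫ s in (0 : ℝ)..t, G (t - s) (g₀ s))
      atTop (Set.Icc 0 T) :=
  stmt_18_general T hT G hGsc hGcpt hGnorm g g₀ hgn hg₀ φ hφint hφpos hbdd hweak
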